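/- arXiv:1901.01352 — 3 statements merged into one kernel-verified Lean document; each statement's English description precedes it below -/
import Mathlib

section
/- Let θ : ℂ → ℂ be odd and satisfy the addition formula θ(u+x)θ(u-x)θ(v+y)θ(v-y) - θ(v+x)θ(v-x)θ(u+y)θ(u-y) - θ(x+y)θ(x-y)θ(u+v)θ(u-v) = 0 for all u,v,x,y ∈ ℂ, and satisfy θ(u+1/2) = θ(1/2-u). Then for all h, z₁, z₂, w₁, w₂ ∈ ℂ: θ(h-1/2+z₁+w₁)θ(w₂+z₁)θ(h+z₂+w₂)θ(w₁+z₂+1/2) - θ(h-1/2+z₂+w₁)θ(w₂+z₂)θ(h+z₁+w₂)θ(w₁+z₁+1/2) = -θ(h)θ(w₂-w₁+1/2)θ(h+1/2+z₁+z₂+w₁+w₂)θ(z₁-z₂). -/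
theorem theta_four_term_relation_X (θ : ℂ → ℂ)
    (hodd : ∀ u : ℂ, θ (-u) = -θ u)
    (hadd : ∀ u v x y : ℂ,
      θ (u+x) * θ (u-x) * θ (v+y) * θ (v-y)
      - θ (v+x) * θ (v-x) * θ (u+y) * θ (u-y)
      - θ (x+y) * θ (x-y) * θ (u+v) * θ (u-v) = 0)
    (hsym : ∀ u : ℂ, θ (u + 1/2) = θ (1/2 - u)) :
    ∀ h z₁ z₂ w₁ w₂ : ℂ,
      θ (h - 1/2 + z₁ + w₁) * θ (w₂ + z₁) * θ (h + z₂ + w₂) * θ (w₁ + z₂ + 1/2)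
      - θ (h - 1/2 + z₂ + w₁) * θ (w₂ + z₂) * θ (h + z₁ + w₂) * θ (w₁ + z₁ + 1/2)
      = -(θ h * θ (w₂ - w₁ + 1/2) * θ (h + 1/2 + z₁ + z₂ + w₁ + w₂) * θ (z₁ - z₂)) := by
  have hone : ∀ a : ℂ, θ (a + 1) = -θ a := by
    intro a
    rw [show a + 1 = (a + 1/2) + 1/2 by ring, hsym,
        show (1:ℂ)/2 - (a + 1/2) = -a by ring, hodd]
  intro h z₁ z₂ w₁ w₂
  have key := hadd ((h-1/2+2*z₁+w₁+w₂)/2) ((h+1/2+w₂-w₁)/2)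
      ((h-1/2+w₁-w₂)/2) ((h-1/2+2*z₂+w₁+w₂)/2)
  rw [show (h-1/2+2*z₁+w₁+w₂)/2 + (h-1/2+w₁-w₂)/2 = h - 1/2 + z₁ + w₁ by ring,
      show (h-1/2+2*z₁+w₁+w₂)/2 - (h-1/2+w₁-w₂)/2 = w₂ + z₁ by ring,
      show (h+1/2+w₂-w₁)/2 + (h-1/2+2*z₂+w₁+w₂)/2 = h + z₂ + w₂ by ring,
      show (h+1/2+w₂-w₁)/2 - (h-1/2+2*z₂+w₁+w₂)/2 = 1/2 - (w₁ + z₂) by ring,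
      ← hsym (w₁ + z₂),
      show (h+1/2+w₂-w₁)/2 + (h-1/2+w₁-w₂)/2 = h by ring,
      show (h+1/2+w₂-w₁)/2 - (h-1/2+w₁-w₂)/2 = w₂ - w₁ + 1/2 by ring,
      show (h-1/2+2*z₁+w₁+w₂)/2 + (h-1/2+2*z₂+w₁+w₂)/2
        = (h - 1/2 + z₁ + z₂ + w₁ + w₂) by ring,
      show (h-1/2+2*z₁+w₁+w₂)/2 - (h-1/2+2*z₂+w₁+w₂)/2 = z₁ - z₂ by ring,
      show (h-1/2+w₁-w₂)/2 + (h-1/2+2*z₂+w₁+w₂)/2 = h - 1/2 + z₂ + w₁ by ring,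
      show (h-1/2+w₁-w₂)/2 - (h-1/2+2*z₂+w₁+w₂)/2 = -(w₂ + z₂) by ring,
      hodd (w₂ + z₂),
      show (h-1/2+2*z₁+w₁+w₂)/2 + (h+1/2+w₂-w₁)/2 = h + z₁ + w₂ by ring,
      show (h-1/2+2*z₁+w₁+w₂)/2 - (h+1/2+w₂-w₁)/2 = z₁ + w₁ - 1/2 by ring] at key
  have e1 : θ (h + 1/2 + z₁ + z₂ + w₁ + w₂) = -θ (h - 1/2 + z₁ + z₂ + w₁ + w₂) := by
    rw [show h + 1/2 + z₁ + z₂ + w₁ + w₂ = (h - 1/2 + z₁ + z₂ + w₁ + w₂) + 1 by ring,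
        hone]
  have e2 : θ (w₁ + z₁ + 1/2) = -θ (z₁ + w₁ - 1/2) := by
    rw [show w₁ + z₁ + 1/2 = (z₁ + w₁ - 1/2) + 1 by ring, hone]
  rw [e1, e2]
  linear_combination key
end

section
/- Let θ : ℂ → ℂ be odd and satisfy the addition formula θ(u+x)θ(u-x)θ(v+y)θ(v-y) - θ(v+x)θ(v-x)θ(u+y)θ(u-y) - θ(x+y)θ(x-y)θ(u+v)θ(u-v) = 0 for all u,v,x,y ∈ ℂ. Then for all h, z₁, z₂, w₁, w₂ ∈ ℂ: θ(h+1/2+w₁+z₁)θ(z₂+w₁)θ(h+1/2+w₂+z₂)θ(z₁+w₂) - θ(h+1/2+w₁+z₂)θ(z₁+w₁)θ(h+1/2+w₂+z₁)θ(z₂+w₂) = θ(h+1/2)θ(z₁-z₂)θ(h+1/2+z₁+z₂+w₁+w₂)θ(w₁-w₂). -/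
theorem theta_four_term_relation_Y (θ : ℂ → ℂ)
    (hodd : ∀ u : ℂ, θ (-u) = -θ u)
    (hadd : ∀ u v x y : ℂ,
      θ (u+x) * θ (u-x) * θ (v+y) * θ (v-y)
      - θ (v+x) * θ (v-x) * θ (u+y) * θ (u-y)
      - θ (x+y) * θ (x-y) * θ (u+v) * θ (u-v) = 0) :
    ∀ h z₁ z₂ w₁ w₂ : ℂ,
      θ (h + 1/2 + w₁ + z₁) * θ (z₂ + w₁) * θ (h + 1/2 + w₂ + z₂) * θ (z₁ + w₂)
      - θ (h + 1/2 + w₁ + z₂) * θ (z₁ + w₁) * θ (h + 1/2 + w₂ + z₁) * θ (z₂ + w₂)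
      = θ (h + 1/2) * θ (z₁ - z₂) * θ (h + 1/2 + z₁ + z₂ + w₁ + w₂) * θ (w₁ - w₂) := by
  intro h z₁ z₂ w₁ w₂
  have key := hadd ((h + 1/2 + 2*w₁ + z₁ + z₂)/2) ((h + 1/2 + 2*w₂ + z₁ + z₂)/2)
      ((h + 1/2 + z₁ - z₂)/2) ((h + 1/2 + z₂ - z₁)/2)
  have e1 : (h + 1/2 + 2*w₁ + z₁ + z₂)/2 + (h + 1/2 + z₁ - z₂)/2 = h + 1/2 + w₁ + z₁ := by ring
  have e2 : (h + 1/2 + 2*w₁ + z₁ + z₂)/2 - (h + 1/2 + z₁ - z₂)/2 = z₂ + w₁ := by ring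
  have e3 : (h + 1/2 + 2*w₂ + z₁ + z₂)/2 + (h + 1/2 + z₂ - z₁)/2 = h + 1/2 + w₂ + z₂ := by ring
  have e4 : (h + 1/2 + 2*w₂ + z₁ + z₂)/2 - (h + 1/2 + z₂ - z₁)/2 = z₁ + w₂ := by ring
  have e5 : (h + 1/2 + 2*w₂ + z₁ + z₂)/2 + (h + 1/2 + z₁ - z₂)/2 = h + 1/2 + w₂ + z₁ := by ring
  have e6 : (h + 1/2 + 2*w₂ + z₁ + z₂)/2 - (h + 1/2 + z₁ - z₂)/2 = z₂ + w₂ := by ring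
  have e7 : (h + 1/2 + 2*w₁ + z₁ + z₂)/2 + (h + 1/2 + z₂ - z₁)/2 = h + 1/2 + w₁ + z₂ := by ring
  have e8 : (h + 1/2 + 2*w₁ + z₁ + z₂)/2 - (h + 1/2 + z₂ - z₁)/2 = z₁ + w₁ := by ring
  have e9 : (h + 1/2 + z₁ - z₂)/2 + (h + 1/2 + z₂ - z₁)/2 = h + 1/2 := by ring
  have e10 : (h + 1/2 + z₁ - z₂)/2 - (h + 1/2 + z₂ - z₁)/2 = z₁ - z₂ := by ring
  have e11 : (h + 1/2 + 2*w₁ + z₁ + z₂)/2 + (h + 1/2 + 2*w₂ + z₁ + z₂)/2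
      = h + 1/2 + z₁ + z₂ + w₁ + w₂ := by ring
  have e12 : (h + 1/2 + 2*w₁ + z₁ + z₂)/2 - (h + 1/2 + 2*w₂ + z₁ + z₂)/2 = w₁ - w₂ := by ring
  rw [e1, e2, e3, e4, e5, e6, e7, e8, e9, e10, e11, e12] at key
  linear_combination key
end

section
/- Let θ : ℂ → ℂ be odd, satisfy θ(u+1/2) = θ(1/2-u), and the addition formula θ(u+x)θ(u-x)θ(v+y)θ(v-y) - θ(v+x)θ(v-x)θ(u+y)θ(u-y) - θ(x+y)θ(x-y)θ(u+v)θ(u-v) = 0. Define the 2×2 matrices X₂ and Y₂ with entries X₂_{jk} = θ(h+(j-2)/2+z_k+w_j)·∏_{ℓ<j}θ(w_ℓ+z_k+1/2)·∏_{ℓ>j, ℓ≤2}θ(w_ℓ+z_k)·∏_{ℓ=1}^{2}θ(w_ℓ-z_k) - θ(h+(j-2)/2-z_k+w_j)·∏_{ℓ<j}θ(w_ℓ-z_k+1/2)·∏_{ℓ>j, ℓ≤2}θ(w_ℓ-z_k)·∏_{ℓ=1}^{2}θ(w_ℓ+z_k), and Y₂_{jk} = θ(h+1/2+w_k+z_j)·∏_{ℓ≠j}θ(z_ℓ+w_k)·∏_{ℓ=1}^{2}θ(z_ℓ-w_k)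 - θ(-h-1/2-w_k+z_j)·∏_{ℓ≠j}θ(z_ℓ-w_k)·∏_{ℓ=1}^{2}θ(z_ℓ+w_k). Then θ(h+1/2)θ(w₂-w₁)·det X₂ = θ(h)θ(w₂-w₁+1/2)·det Y₂ for all h, z₁, z₂, w₁, w₂ ∈ ℂ. -/
open Finset in
noncomputable def Xmat (θ : ℂ → ℂ) (N : ℕ) (z w : Fin N → ℂ) (h : ℂ) :
    Matrix (Fin N) (Fin N) ℂ := fun j k =>
  θ (h + (((j : ℕ) : ℂ) + 1 - (N : ℂ)) / 2 + z k + w j)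
      * (∏ ℓ ∈ univ.filter (fun ℓ : Fin N => ℓ < j), θ (w ℓ + z k + 1/2))
      * (∏ ℓ ∈ univ.filter (fun ℓ : Fin N => j < ℓ), θ (w ℓ + z k))
      * (∏ ℓ, θ (w ℓ - z k))
  - θ (h + (((j : ℕ) : ℂ) + 1 - (N : ℂ)) / 2 - z k + w j)
      * (∏ ℓ ∈ univ.filter (fun ℓ : Fin N => ℓ < j), θ (w ℓ - z k + 1/2))
      * (∏ ℓ ∈ univ.filter (fun ℓ : Fin N => j < ℓ), θ (w ℓ - z k))
      * (∏ ℓ, θ (w ℓ + z k))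
noncomputable def Ymat (θ : ℂ → ℂ) (N : ℕ) (z w : Fin N → ℂ) (h : ℂ) :
    Matrix (Fin N) (Fin N) ℂ := fun j k =>
  θ (h + ((N : ℂ) - 1) / 2 + w k + z j)
      * (∏ ℓ ∈ Finset.univ.erase j, θ (z ℓ + w k))
      * (∏ ℓ, θ (z ℓ - w k))
  - θ (-h - ((N : ℂ) - 1) / 2 - w k + z j)
      * (∏ ℓ ∈ Finset.univ.erase j, θ (z ℓ - w k))
      * (∏ ℓ, θ (z ℓ + w k))

theorem elliptic_determinant_duality_N2 (θ : ℂ → ℂ)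
    (hodd : ∀ u : ℂ, θ (-u) = -θ u)
    (hsym : ∀ u : ℂ, θ (u + 1/2) = θ (1/2 - u))
    (hadd : ∀ u v x y : ℂ,
      θ (u+x) * θ (u-x) * θ (v+y) * θ (v-y)
      - θ (v+x) * θ (v-x) * θ (u+y) * θ (u-y)
      - θ (x+y) * θ (x-y) * θ (u+v) * θ (u-v) = 0)
    (h z₁ z₂ w₁ w₂ : ℂ) :
    θ (h + 1/2) * θ (w₂ - w₁) * (Xmat θ 2 ![z₁, z₂] ![w₁, w₂] h).det
      = θ h * θ (w₂ - w₁ + 1/2) * (Ymat θ 2 ![z₁, z₂] ![w₁, w₂] h).det := by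
  have hhalf : ∀ x : ℂ, θ (x - 1/2) = -θ (x + 1/2) := by
    intro x
    rw [show x - 1/2 = -(1/2 - x) by ring, hodd, ← hsym]
  have key : ∀ a b c : ℂ,
      θ (h+1/2) * θ (b-a) *
        (θ (h+b+c) * θ (a+c+1/2) * θ (a-c) * θ (b-c)
          - θ (h+b-c) * θ (a-c+1/2) * θ (a+c) * θ (b+c))
      + θ h * θ (b-a+1/2) * θ (a+c) * θ (a-c) *
        (θ (h+b+c+1/2) * θ (b-c) - θ (h+b-c+1/2) * θ (b+c))
      + θ (1/2) * θ (h+b-a) * θ (b+c) * θ (b-c) *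
        (θ (h+a-c+1/2) * θ (a+c) - θ (h+a+c+1/2) * θ (a-c)) = 0 := by
    intro a b c
    have H1 := hadd ((h+a+c)/2) ((h+a+c)/2+1/2) ((-h+a-c)/2-b) ((-h+a+c)/2)
    rw [show (h+a+c)/2 + ((-h+a-c)/2-b) = -(b-a) by ring, hodd (b-a),
        show (h+a+c)/2 - ((-h+a-c)/2-b) = h+b+c by ring,
        show (h+a+c)/2+1/2 + (-h+a+c)/2 = a+c+1/2 by ring,
        show (h+a+c)/2+1/2 - (-h+a+c)/2 = h+1/2 by ring,
        show (h+a+c)/2+1/2 + ((-h+a-c)/2-b) = 1/2-(b-a) by ring, ← hsym (b-a),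
        show (h+a+c)/2+1/2 - ((-h+a-c)/2-b) = h+b+c+1/2 by ring,
        show (h+a+c)/2 + (-h+a+c)/2 = a+c by ring,
        show (h+a+c)/2 - (-h+a+c)/2 = h by ring,
        show (-h+a-c)/2-b + (-h+a+c)/2 = -(h+b-a) by ring, hodd (h+b-a),
        show (-h+a-c)/2-b - (-h+a+c)/2 = -(b+c) by ring, hodd (b+c),
        show (h+a+c)/2 + ((h+a+c)/2+1/2) = h+a+c+1/2 by ring,
        show (h+a+c)/2 - ((h+a+c)/2+1/2) = -(1/2) by ring, hodd (1/2)] at H1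
    have H2 := hadd ((h+a-c)/2) ((h+a-c)/2+1/2) ((-h+a+c)/2-b) ((-h+a-c)/2)
    rw [show (h+a-c)/2 + ((-h+a+c)/2-b) = -(b-a) by ring, hodd (b-a),
        show (h+a-c)/2 - ((-h+a+c)/2-b) = h+b-c by ring,
        show (h+a-c)/2+1/2 + (-h+a-c)/2 = a-c+1/2 by ring,
        show (h+a-c)/2+1/2 - (-h+a-c)/2 = h+1/2 by ring,
        show (h+a-c)/2+1/2 + ((-h+a+c)/2-b) = 1/2-(b-a) by ring, ← hsym (b-a),
        show (h+a-c)/2+1/2 - ((-h+a+c)/2-b) = h+b-c+1/2 by ring,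
        show (h+a-c)/2 + (-h+a-c)/2 = a-c by ring,
        show (h+a-c)/2 - (-h+a-c)/2 = h by ring,
        show (-h+a+c)/2-b + (-h+a-c)/2 = -(h+b-a) by ring, hodd (h+b-a),
        show (-h+a+c)/2-b - (-h+a-c)/2 = -(b-c) by ring, hodd (b-c),
        show (h+a-c)/2 + ((h+a-c)/2+1/2) = h+a-c+1/2 by ring,
        show (h+a-c)/2 - ((h+a-c)/2+1/2) = -(1/2) by ring, hodd (1/2)] at H2
    linear_combination (θ (b+c) * θ (a+c)) * H2 - (θ (b-c) * θ (a-c)) * H1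
  have e0 : (Finset.univ.erase (0 : Fin 2)) = {1} := by decide
  have e1 : (Finset.univ.erase (1 : Fin 2)) = {0} := by decide
  simp only [Xmat, Ymat, Matrix.det_fin_two, Finset.prod_filter, Fin.prod_univ_two, e0, e1,
    Finset.prod_singleton,
    Matrix.cons_val_zero, Matrix.cons_val_one, Matrix.head_cons, Fin.val_zero, Fin.val_one]
  norm_num
  rw [show h + -(1/2) + z₁ + w₁ = h + w₁ + z₁ - 1/2 by ring, hhalf (h+w₁+z₁),
      show h + -(1/2) - z₁ + w₁ = h + w₁ - z₁ - 1/2 by ring, hhalf (h+w₁-z₁),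
      show h + -(1/2) + z₂ + w₁ = h + w₁ + z₂ - 1/2 by ring, hhalf (h+w₁+z₂),
      show h + -(1/2) - z₂ + w₁ = h + w₁ - z₂ - 1/2 by ring, hhalf (h+w₁-z₂),
      show h + z₁ + w₂ = h + w₂ + z₁ by ring, show h - z₁ + w₂ = h + w₂ - z₁ by ring,
      show h + z₂ + w₂ = h + w₂ + z₂ by ring, show h - z₂ + w₂ = h + w₂ - z₂ by ring,
      show h + 1/2 + w₁ + z₁ = h + w₁ + z₁ + 1/2 by ring,
      show h + 1/2 + w₁ + z₂ = h + w₁ + z₂ + 1/2 by ring,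
      show h + 1/2 + w₂ + z₁ = h + w₂ + z₁ + 1/2 by ring,
      show h + 1/2 + w₂ + z₂ = h + w₂ + z₂ + 1/2 by ring,
      show -h - 1/2 - w₁ + z₁ = -(h + w₁ - z₁ + 1/2) by ring, hodd (h+w₁-z₁+1/2),
      show -h - 1/2 - w₁ + z₂ = -(h + w₁ - z₂ + 1/2) by ring, hodd (h+w₁-z₂+1/2),
      show -h - 1/2 - w₂ + z₁ = -(h + w₂ - z₁ + 1/2) by ring, hodd (h+w₂-z₁+1/2),
      show -h - 1/2 - w₂ + z₂ = -(h + w₂ - z₂ + 1/2) by ring, hodd (h+w₂-z₂+1/2),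
      show z₁ + w₁ = w₁ + z₁ by ring, show z₂ + w₁ = w₁ + z₂ by ring,
      show z₁ + w₂ = w₂ + z₁ by ring, show z₂ + w₂ = w₂ + z₂ by ring,
      show z₁ - w₁ = -(w₁ - z₁) by ring, hodd (w₁ - z₁),
      show z₂ - w₁ = -(w₁ - z₂) by ring, hodd (w₁ - z₂),
      show z₁ - w₂ = -(w₂ - z₁) by ring, hodd (w₂ - z₁),
      show z₂ - w₂ = -(w₂ - z₂) by ring, hodd (w₂ - z₂)]
  linear_combination
    (θ (w₂+z₁) * θ (w₂-z₁) *
      (θ (h+w₁-z₁+1/2) * θ (w₁+z₁) - θ (h+w₁+z₁+1/2) * θ (w₁-z₁))) * key w₁ w₂ z₂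
    - (θ (w₂+z₂) * θ (w₂-z₂) *
      (θ (h+w₁-z₂+1/2) * θ (w₁+z₂) - θ (h+w₁+z₂+1/2) * θ (w₁-z₂))) * key w₁ w₂ z₁
end
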